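/- arXiv:2601.23054 — 2 statements merged into one kernel-verified Lean document; each statement's English description precedes it below -/
import Mathlib

section
/- The commutator subgroup [H,H] is generated by the set { [R_a, t] : a ∈ A, t ∈ Q } ∪ { [t_1, t_2] : t_1, t_2 ∈ Q }, where [x,y] = x y x⁻¹ y⁻¹ and R_a is the rotation by a. -/
open Equiv

open scoped commutatorElement

noncomputable section

/-- The circle `ℝ/ℤ`. -/
abbrev Circ : Type := AddCircle (1 : ℝ)

/-- Rotation by `a` : the bijection `x ↦ x + a` of the circle. -/
def Rot (a : Circ) : Equiv.Perm Circ := Equiv.addRight a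

/-- The subgroup `{ p/q mod 1 : p ∈ ℤ }` of the circle. -/
def RatPts (q : ℕ) : AddSubgroup Circ :=
  AddSubgroup.zmultiples (((q : ℝ)⁻¹ : ℝ) : Circ)

/-- The group of bijections of the circle all of whose displacements lie in `RatPts q`. -/
def Delta (q : ℕ) : Subgroup (Equiv.Perm Circ) where
  carrier := {f | ∀ x : Circ, f x - x ∈ RatPts q}
  one_mem' := by intro x; simpa using zero_mem (RatPts q)
  mul_mem' := by
    intro f g hf hg x
    have h1 : f (g x) - g x ∈ RatPts q := hf (g x)
    have h2 : g x - x ∈ RatPts q := hg x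
    have h3 := add_mem h1 h2
    simpa [Equiv.Perm.mul_apply, sub_add_sub_cancel] using h3
  inv_mem' := by
    intro f hf x
    have h1 : f (f⁻¹ x) - f⁻¹ x ∈ RatPts q := hf (f⁻¹ x)
    rw [Equiv.Perm.coe_inv, Equiv.apply_symm_apply] at h1
    simpa using neg_mem h1

/-- The subgroup `A` of the circle generated by the classes of `α₁, …, α_s`. -/
def Agrp (s : ℕ) (α : Fin s → ℝ) : AddSubgroup Circ :=
  AddSubgroup.closure (Set.range fun i => ((α i : ℝ) : Circ))

/-- The group `H` generated by the rotations `R_{αᵢ}` and the maps `E_{τⱼ}`. -/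
def Hgrp (s m q : ℕ) (α : Fin s → ℝ) (τs : Fin m → Equiv.Perm (Fin q))
    (E : Equiv.Perm (Fin q) → Equiv.Perm Circ) : Subgroup (Equiv.Perm Circ) :=
  Subgroup.closure ((Set.range fun i => Rot ((α i : ℝ) : Circ)) ∪ (Set.range fun j => E (τs j)))

/-- The group `Q` generated by the maps `E_{τⱼ}`. -/
def Qgrp (m q : ℕ) (τs : Fin m → Equiv.Perm (Fin q))
    (E : Equiv.Perm (Fin q) → Equiv.Perm Circ) : Subgroup (Equiv.Perm Circ) :=
  Subgroup.closure (Set.range fun j => E (τs j))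

/-- The subgroup `𝔖(Q)` of `S_q` generated by `τ₁, …, τ_m`. -/
def SQgrp (m q : ℕ) (τs : Fin m → Equiv.Perm (Fin q)) : Subgroup (Equiv.Perm (Fin q)) :=
  Subgroup.closure (Set.range τs)

/-- The subgroup `W = ⟨σ, τ₁, …, τ_m⟩` of `S_q`, where `σ` is the `q`-cycle. -/
def Wgrp (m q : ℕ) (τs : Fin m → Equiv.Perm (Fin q)) : Subgroup (Equiv.Perm (Fin q)) :=
  Subgroup.closure ({finRotate q} ∪ Set.range τs)

/-!
Let `N` be the subgroup generated by the commutators `⁅r, t⁆` and `⁅t₁, t₂⁆`. Conjugating one of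
these generators by a rotation or by an element of `Q` gives a product of such generators, so `N`
is normalised by `H`. Modulo a subgroup normalised by `H = closure S`, the commutator subgroup
`⁅H, H⁆` is generated by the commutators of elements of `S`; taking `S` to be the rotations
together with `Q`, these are either trivial (rotations commute) or lie in `N`.
-/

namespace Subgroup

variable {G : Type*} [Group G]

theorem commutator_mem_of_mem_closure {N : Subgroup G} {T : Set G}
    (hT : closure T ≤ normalizer (N : Set G)) {x : G} (hx : ∀ y ∈ T, ⁅x, y⁆ ∈ N) {g : G}
    (hg : g ∈ closure T) : ⁅x, g⁆ ∈ N := by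
  have conj_mem {k : G} (hk : k ∈ closure T) {n : G} (hn : n ∈ N) : k * n * k⁻¹ ∈ N :=
    (hT hk n).mp hn
  induction hg using closure_induction with
  | mem y hy => exact hx y hy
  | one => simp
  | mul k₁ k₂ hk₁ _ ih₁ ih₂ =>
    rw [commutatorElement_mul_right_eq_mul_conj]
    simpa only [mul_assoc] using mul_mem ih₁ (conj_mem hk₁ ih₂)
  | inv k hk ih =>
    rw [commutatorElement_inv_right, ← commutatorElement_inv]
    simpa using conj_mem (inv_mem hk) (inv_mem ih)

theorem commutator_closure_le {N : Subgroup G} {S T : Set G}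
    (hS : closure S ≤ normalizer (N : Set G)) (hT : closure T ≤ normalizer (N : Set G))
    (h : ∀ x ∈ S, ∀ y ∈ T, ⁅x, y⁆ ∈ N) : ⁅closure S, closure T⁆ ≤ N := by
  rw [commutator_le]
  intro g₁ hg₁ g₂ hg₂
  rw [← commutatorElement_inv]
  refine inv_mem (commutator_mem_of_mem_closure hS (fun x hx => ?_) hg₁)
  rw [← commutatorElement_inv]
  exact inv_mem (commutator_mem_of_mem_closure hT (h x hx) hg₂)

def mixedCommutators (R Q : Subgroup G) : Set G :=
  {f | ∃ r ∈ R, ∃ t ∈ Q, f = ⁅r, t⁆} ∪ {f | ∃ t₁ ∈ Q, ∃ t₂ ∈ Q, f = ⁅t₁, t₂⁆}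

variable {R Q : Subgroup G}

theorem left_le_normalizer_closure_mixedCommutators :
    R ≤ normalizer (closure (mixedCommutators R Q) : Set G) := by
  rw [le_normalizer_closure_iff]
  rintro b hb f (⟨a, ha, t, ht, rfl⟩ | ⟨t₁, h₁, t₂, h₂, rfl⟩)
  · have : b * ⁅a, t⁆ * b⁻¹ = ⁅b * a, t⁆ * ⁅b, t⁆⁻¹ := by
      simp only [commutatorElement_def]; group
    rw [this]
    exact mul_mem (subset_closure (Or.inl ⟨_, mul_mem hb ha, t, ht, rfl⟩))
      (inv_mem (subset_closure (Or.inl ⟨b, hb, t, ht, rfl⟩)))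
  · rw [← MulAut.conj_apply, conj_eq_commutatorElement_mul]
    have hcomm : ⁅t₁, t₂⁆ ∈ Q := commutator_le_self Q (commutator_mem_commutator h₁ h₂)
    exact mul_mem (subset_closure (Or.inl ⟨b, hb, _, hcomm, rfl⟩))
      (subset_closure (Or.inr ⟨t₁, h₁, t₂, h₂, rfl⟩))

theorem right_le_normalizer_closure_mixedCommutators :
    Q ≤ normalizer (closure (mixedCommutators R Q) : Set G) := by
  rw [le_normalizer_closure_iff]
  rintro c hc f (⟨a, ha, t, ht, rfl⟩ | ⟨t₁, h₁, t₂, h₂, rfl⟩)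
  · have : c * ⁅a, t⁆ * c⁻¹ = ⁅a, c⁆⁻¹ * ⁅a, c * t⁆ := by
      simp only [commutatorElement_def]; group
    rw [this]
    exact mul_mem (inv_mem (subset_closure (Or.inl ⟨a, ha, c, hc, rfl⟩)))
      (subset_closure (Or.inl ⟨a, ha, _, mul_mem hc ht, rfl⟩))
  · rw [conjugate_commutatorElement]
    exact subset_closure (Or.inr ⟨_, mul_mem (mul_mem hc h₁) (inv_mem hc),
      _, mul_mem (mul_mem hc h₂) (inv_mem hc), rfl⟩)

theorem commutator_sup_eq_closure_mixedCommutators [IsMulCommutative R] :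
    ⁅R ⊔ Q, R ⊔ Q⁆ = closure (mixedCommutators R Q) := by
  refine le_antisymm ?_ ?_
  · have hRQ : R ⊔ Q ≤ normalizer (closure (mixedCommutators R Q) : Set G) :=
      sup_le left_le_normalizer_closure_mixedCommutators
        right_le_normalizer_closure_mixedCommutators
    rw [sup_eq_closure] at hRQ ⊢
    refine commutator_closure_le hRQ hRQ ?_
    rintro x (hx | hx) y (hy | hy)
    · rw [commutatorElement_eq_one_iff_mul_comm.mpr (setLike_mul_comm hx hy)]
      exact one_mem _
    · exact subset_closure (Or.inl ⟨x, hx, y, hy, rfl⟩)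
    · rw [← commutatorElement_inv]
      exact inv_mem (subset_closure (Or.inl ⟨y, hy, x, hx, rfl⟩))
    · exact subset_closure (Or.inr ⟨x, hx, y, hy, rfl⟩)
  · rw [closure_le]
    rintro f (⟨r, hr, t, ht, rfl⟩ | ⟨t₁, h₁, t₂, h₂, rfl⟩)
    · exact commutator_mem_commutator (mem_sup_left hr) (mem_sup_right ht)
    · exact commutator_mem_commutator (mem_sup_right h₁) (mem_sup_right h₂)

end Subgroup

def rotHom : Multiplicative Circ →* Equiv.Perm Circ where
  toFun a := Rot a.toAdd
  map_one' := by ext x; simp [Rot]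
  map_mul' a b := by ext x; simp [Rot, add_assoc, add_comm a.toAdd]

def rotations (A : AddSubgroup Circ) : Subgroup (Equiv.Perm Circ) :=
  A.toSubgroup.map rotHom

theorem mem_rotations {A : AddSubgroup Circ} {g : Equiv.Perm Circ} :
    g ∈ rotations A ↔ ∃ a ∈ A, Rot a = g := by
  simp [rotations, rotHom]

instance (A : AddSubgroup Circ) : IsMulCommutative (rotations A) := by
  unfold rotations; infer_instance

theorem closure_range_rot {ι : Type*} (v : ι → Circ) :
    Subgroup.closure (Set.range fun i => Rot (v i)) =
      rotations (AddSubgroup.closure (Set.range v)) := by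
  rw [rotations, AddSubgroup.toSubgroup_closure, MonoidHom.map_closure]
  congr 1
  ext g
  simp [rotHom]

theorem stmt_5_general
    (s m q : ℕ)
    (α : Fin s → ℝ)
    (τs : Fin m → Equiv.Perm (Fin q))
    (E : Equiv.Perm (Fin q) → Equiv.Perm Circ)
    : ⁅Hgrp s m q α τs E, Hgrp s m q α τs E⁆ =
      Subgroup.closure
        ({f : Equiv.Perm Circ | ∃ a ∈ Agrp s α, ∃ t ∈ Qgrp m q τs E, f = ⁅Rot a, t⁆} ∪
         {f : Equiv.Perm Circ | ∃ t₁ ∈ Qgrp m q τs E, ∃ t₂ ∈ Qgrp m q τs E, f = ⁅t₁, t₂⁆}) := by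
  have hH : Hgrp s m q α τs E = rotations (Agrp s α) ⊔ Qgrp m q τs E := by
    rw [Hgrp, Subgroup.closure_union, closure_range_rot]
    rfl
  rw [hH, Subgroup.commutator_sup_eq_closure_mixedCommutators]
  congr 1
  ext f
  simp [Subgroup.mixedCommutators, mem_rotations]

theorem stmt_5
    (s m q : ℕ) (hs : 1 ≤ s) (hm : 1 ≤ m) (hq : 2 ≤ q)
    (α : Fin s → ℝ) (hα : LinearIndependent ℚ (Fin.cons (1 : ℝ) α))
    (τs : Fin m → Equiv.Perm (Fin q))
    (E : Equiv.Perm (Fin q) → Equiv.Perm Circ)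
    (hE : ∀ (τ : Equiv.Perm (Fin q)) (i : Fin q) (t : ℝ), 0 ≤ t → t < 1 / q →
      E τ ((((i : ℕ) : ℝ) / q + t : ℝ) : Circ) = ((((τ i : ℕ) : ℝ) / q + t : ℝ) : Circ))
    : ⁅Hgrp s m q α τs E, Hgrp s m q α τs E⁆ =
      Subgroup.closure
        ({f : Equiv.Perm Circ | ∃ a ∈ Agrp s α, ∃ t ∈ Qgrp m q τs E, f = ⁅Rot a, t⁆} ∪
         {f : Equiv.Perm Circ | ∃ t₁ ∈ Qgrp m q τs E, ∃ t₂ ∈ Qgrp m q τs E, f = ⁅t₁, t₂⁆}) :=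
  stmt_5_general s m q α τs E
end
end

section
/- In the symmetric group S_q, let W = ⟨σ, 𝔖(Q)⟩. Then the commutator subgroup [W,W] equals the subgroup generated by the set { [σ^p, t] : 0 ≤ p ≤ q−1, t ∈ 𝔖(Q) } ∪ { [t_1, t_2] : t_1, t_2 ∈ 𝔖(Q) }, where [x,y] = x y x⁻¹ y⁻¹. -/
open Equiv

open scoped commutatorElement

noncomputable section

/-! Write `W = K ⊔ H` with `K = ⟨σ⟩` abelian and `H = 𝔖(Q)`, and let `N` be generated by the
commutators `⁅k, t⁆` (`k ∈ K`, `t ∈ H`) and `⁅t₁, t₂⁆` (`t₁, t₂ ∈ H`). Commutator identities show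
that `K` and `H`, hence `W`, normalize `N`. As every commutator of two generators of `W` lies in `N`
(those of two elements of `K` are trivial), `⁅W, W⁆ ≤ N`. Finally `K = {σ ^ p | p < q}` since `σ`
has order `q`. -/

open Subgroup

section CommutatorGenerators

variable {G : Type*} [Group G]

def commutatorGenerators (K H : Subgroup G) : Set G :=
  {c | ∃ k ∈ K, ∃ t ∈ H, c = ⁅k, t⁆} ∪ {c | ∃ t₁ ∈ H, ∃ t₂ ∈ H, c = ⁅t₁, t₂⁆}

theorem commutatorElement_mem_of_mem_closure_right {N : Subgroup G} {s : Set G}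
    (hs : closure s ≤ normalizer N) {a : G} (ha : ∀ b ∈ s, ⁅a, b⁆ ∈ N) :
    ∀ h ∈ closure s, ⁅a, h⁆ ∈ N := by
  intro h hh
  induction hh using closure_induction with
  | mem b hb => exact ha b hb
  | one => rw [commutatorElement_one_right]; exact one_mem N
  | mul x y hx _ ihx ihy =>
      rw [commutatorElement_mul_right_eq_mul_conj, mul_assoc _ x, mul_assoc]
      exact mul_mem ihx ((mem_normalizer_iff.mp (hs hx) _).mp ihy)
  | inv x hx ihx =>
      rw [commutatorElement_inv_right, ← commutatorElement_inv]
      simpa only [inv_inv] using (mem_normalizer_iff.mp (hs (inv_mem hx)) _).mp (inv_mem ihx)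

theorem commutator_closure_le {N : Subgroup G} {s : Set G} (hs : closure s ≤ normalizer N)
    (hN : ∀ a ∈ s, ∀ b ∈ s, ⁅a, b⁆ ∈ N) : ⁅closure s, closure s⁆ ≤ N := by
  refine commutator_le.mpr fun g hg h hh ↦ ?_
  refine commutatorElement_mem_of_mem_closure_right hs (fun b hb ↦ ?_) h hh
  rw [← commutatorElement_inv]
  exact inv_mem (commutatorElement_mem_of_mem_closure_right hs (hN b hb) g hg)

variable {K H : Subgroup G}

theorem le_normalizer_closure_commutatorGenerators_left :
    K ≤ normalizer (closure (commutatorGenerators K H)) := by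
  refine le_normalizer_closure_iff.mpr ?_
  rintro k₀ hk₀ _ (⟨k, hk, t, ht, rfl⟩ | ⟨t₁, ht₁, t₂, ht₂, rfl⟩)
  · have hconj : k₀ * ⁅k, t⁆ * k₀⁻¹ = ⁅k₀ * k, t⁆ * ⁅k₀, t⁆⁻¹ := by
      rw [commutatorElement_mul_left_eq_conj_mul, mul_inv_cancel_right]
    rw [hconj]
    exact mul_mem (subset_closure (Or.inl ⟨_, mul_mem hk₀ hk, t, ht, rfl⟩))
      (inv_mem (subset_closure (Or.inl ⟨k₀, hk₀, t, ht, rfl⟩)))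
  · have hc : ⁅t₁, t₂⁆ ∈ H := by
      rw [commutatorElement_def]
      exact mul_mem (mul_mem (mul_mem ht₁ ht₂) (inv_mem ht₁)) (inv_mem ht₂)
    -- `k₀ c k₀⁻¹ = ⁅k₀, c⁆ c`, and `⁅k₀, c⁆` is a generator because `c ∈ H`
    rw [← inv_mul_cancel_right (k₀ * ⁅t₁, t₂⁆ * k₀⁻¹) ⁅t₁, t₂⁆, ← commutatorElement_def]
    exact mul_mem (subset_closure (Or.inl ⟨k₀, hk₀, _, hc, rfl⟩))
      (subset_closure (Or.inr ⟨t₁, ht₁, t₂, ht₂, rfl⟩))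

theorem le_normalizer_closure_commutatorGenerators_right :
    H ≤ normalizer (closure (commutatorGenerators K H)) := by
  refine le_normalizer_closure_iff.mpr ?_
  rintro t₀ ht₀ _ (⟨k, hk, t, ht, rfl⟩ | ⟨t₁, ht₁, t₂, ht₂, rfl⟩)
  · have hconj : t₀ * ⁅k, t⁆ * t₀⁻¹ = ⁅k, t₀⁆⁻¹ * ⁅k, t₀ * t⁆ := by
      rw [commutatorElement_mul_right_eq_mul_conj]; group
    rw [hconj]
    exact mul_mem (inv_mem (subset_closure (Or.inl ⟨k, hk, t₀, ht₀, rfl⟩)))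
      (subset_closure (Or.inl ⟨k, hk, _, mul_mem ht₀ ht, rfl⟩))
  · rw [conjugate_commutatorElement]
    exact subset_closure (Or.inr ⟨_, mul_mem (mul_mem ht₀ ht₁) (inv_mem ht₀),
      _, mul_mem (mul_mem ht₀ ht₂) (inv_mem ht₀), rfl⟩)

theorem commutator_sup_eq_closure_commutatorGenerators [IsMulCommutative K] :
    ⁅K ⊔ H, K ⊔ H⁆ = closure (commutatorGenerators K H) := by
  apply le_antisymm
  · have hKH : K ⊔ H = closure ((K : Set G) ∪ H) := by
      rw [Subgroup.closure_union, closure_eq, closure_eq]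
    rw [hKH]
    refine commutator_closure_le (hKH ▸ sup_le le_normalizer_closure_commutatorGenerators_left
      le_normalizer_closure_commutatorGenerators_right) ?_
    rintro a (ha | ha) b (hb | hb)
    · rw [commutatorElement_eq_one_iff_mul_comm.mpr (setLike_mul_comm ha hb)]
      exact one_mem _
    · exact subset_closure (Or.inl ⟨a, ha, b, hb, rfl⟩)
    · rw [← commutatorElement_inv]
      exact inv_mem (subset_closure (Or.inl ⟨b, hb, a, ha, rfl⟩))
    · exact subset_closure (Or.inr ⟨a, ha, b, hb, rfl⟩)
  · rw [closure_le]
    rintro _ (⟨k, hk, t, ht, rfl⟩ | ⟨t₁, ht₁, t₂, ht₂, rfl⟩)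
    · exact commutator_mem_commutator (mem_sup_left hk) (mem_sup_right ht)
    · exact commutator_mem_commutator (mem_sup_right ht₁) (mem_sup_right ht₂)

end CommutatorGenerators

theorem orderOf_finRotate {q : ℕ} (hq : 2 ≤ q) : orderOf (finRotate q) = q := by
  rw [(isCycle_finRotate_of_le hq).orderOf, support_finRotate_of_le hq, Finset.card_univ,
    Fintype.card_fin]

theorem stmt_9
    (q : ℕ) (hq : 2 ≤ q)
    (SQ : Subgroup (Equiv.Perm (Fin q)))
    (W : Subgroup (Equiv.Perm (Fin q)))
    (hW : W = Subgroup.closure ({finRotate q} ∪ (SQ : Set (Equiv.Perm (Fin q))))) :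
    ⁅W, W⁆ = Subgroup.closure
      ({π : Equiv.Perm (Fin q) | ∃ p < q, ∃ t ∈ SQ, π = ⁅finRotate q ^ p, t⁆} ∪
       {π : Equiv.Perm (Fin q) | ∃ t₁ ∈ SQ, ∃ t₂ ∈ SQ, π = ⁅t₁, t₂⁆}) := by
  have hW' : W = zpowers (finRotate q) ⊔ SQ := by
    rw [hW, Subgroup.closure_union, ← zpowers_eq_closure, closure_eq]
  rw [hW', commutator_sup_eq_closure_commutatorGenerators, commutatorGenerators]
  congr 3
  ext π
  simp only [mem_zpowers_iff_mem_range_orderOf, orderOf_finRotate hq,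
    Finset.mem_image, Finset.mem_range]
  constructor
  · rintro ⟨_, ⟨p, hp, rfl⟩, t, ht, rfl⟩
    exact ⟨p, hp, t, ht, rfl⟩
  · rintro ⟨p, hp, t, ht, rfl⟩
    exact ⟨_, ⟨p, hp, rfl⟩, t, ht, rfl⟩
end
end
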